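/- arXiv:2409.12502 — 4 statements merged into one kernel-verified Lean document; each statement's English description precedes it below -/
import Mathlib

section
/- For every μ ∈ 𝐌 and every p ∈ [0,1), the pseudo-Lorenz and Lorenz functions satisfy Λ_μ(p) − L_μ(p) = (Q_μ(p)/m_μ) · (F_μ(Q_μ(p)) − p). -/
open MeasureTheory Filter Topology

noncomputable section

/-- The mean of a measure on `ℝ`. -/
def mMean (μ : Measure ℝ) : ℝ := ∫ x, x ∂μ

/-- `μ ∈ 𝐌`: a Borel probability measure on `ℝ₊` (modelled as a measure on `ℝ` giving no
mass to negative numbers) with finite nonzero mean. -/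
def MemM (μ : Measure ℝ) : Prop :=
  IsProbabilityMeasure μ ∧ μ {x | x < 0} = 0 ∧ Integrable id μ ∧ 0 < mMean μ

/-- The cumulative distribution function `F_μ(x) = μ([0,x])`. -/
def cdfR (μ : Measure ℝ) (x : ℝ) : ℝ := (μ (Set.Icc 0 x)).toReal

/-- The quantile function `Q_μ(p) = inf {x ∈ ℝ₊ : F_μ(x) ≥ p}`. -/
def quant (μ : Measure ℝ) (p : ℝ) : ℝ := sInf {x : ℝ | 0 ≤ x ∧ p ≤ cdfR μ x}

/-- The Lorenz function `L_μ(p) = (∫_0^p Q_μ(t) dt) / m_μ`. -/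
def lorenz (μ : Measure ℝ) (p : ℝ) : ℝ := (∫ t in (0:ℝ)..p, quant μ t) / mMean μ

/-- The pseudo-Lorenz function `Λ_μ(p) = (∫_{[0,Q_μ(p)]} u dμ(u)) / m_μ` for `p ∈ [0,1)`,
with `Λ_μ(1) = 1`. -/
def pseudoLorenz (μ : Measure ℝ) (p : ℝ) : ℝ :=
  if p = 1 then 1 else (∫ u in Set.Icc (0:ℝ) (quant μ p), u ∂μ) / mMean μ

/-- The Gini coefficient `G(μ) = (∫∫ |x-y| d(μ⊗μ)) / (2 m_μ)`. -/
def gini (μ : Measure ℝ) : ℝ := (∫ z : ℝ × ℝ, |z.1 - z.2| ∂(μ.prod μ)) / (2 * mMean μ)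

/-- The Hoover coefficient `H(μ) = (∫ |x - m_μ| dμ) / (2 m_μ)`. -/
def hoover (μ : Measure ℝ) : ℝ := (∫ x, |x - mMean μ| ∂μ) / (2 * mMean μ)

/-- The Wasserstein-1 distance `W₁(μ,ν) = ∫_0^1 |Q_μ - Q_ν|`. -/
def W1 (μ ν : Measure ℝ) : ℝ := ∫ t in (0:ℝ)..1, |quant μ t - quant ν t|

/-- Weak convergence of a sequence of measures: convergence of integrals of all bounded
continuous functions. -/
def WeakCv (μs : ℕ → Measure ℝ) (ν : Measure ℝ) : Prop :=
  ∀ f : ℝ → ℝ, Continuous f → (∃ C : ℝ, ∀ x, |f x| ≤ C) →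
    Tendsto (fun n => ∫ x, f x ∂(μs n)) atTop (𝓝 (∫ x, f x ∂ν))

/-- Uniform integrability of a family of measures on `ℝ₊`:
`sup_i ∫_{(α,∞)} x dμ_i(x) → 0` as `α → +∞`. -/
def UnifInt {ι : Type*} (μs : ι → Measure ℝ) : Prop :=
  ∀ ε > (0:ℝ), ∃ A : ℝ, ∀ α ≥ A, ∀ i, (∫ x in Set.Ioi α, x ∂(μs i)) ≤ ε

end

/-!
Write `F = F_μ` and `q = Q_μ(p)`. Both numerators are layer-cake integrals over `x ∈ (0, q)`:
`∫_{[0,q]} u dμ = ∫_0^q (F(q) - F(x)) dx`, and, since right-continuity of `F` gives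
`x < Q(t) ↔ F(x) < t`, also `∫_0^p Q = ∫_0^q (p - F(x)) dx`. In the difference the `F(x)` terms
cancel, leaving `q (F(q) - p)`.
-/

open Set ProbabilityTheory

lemma quant_nonneg (μ : Measure ℝ) (t : ℝ) : 0 ≤ quant μ t :=
  Real.sInf_nonneg fun _ hx => hx.1

lemma setIntegral_Ioi_max_zero_eq_intervalIntegral {g : ℝ → ℝ} {q : ℝ} (hq : 0 ≤ q)
    (hg_nonneg : ∀ x ∈ Ioo 0 q, 0 ≤ g x) (hg_nonpos : ∀ x, q ≤ x → g x ≤ 0) :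
    ∫ x in Ioi 0, max (g x) 0 = ∫ x in 0..q, g x := by
  have h : EqOn (fun x => max (g x) 0) ((Ioo 0 q).indicator g) (Ioi 0) := by
    intro x hx
    dsimp only
    by_cases hxq : x < q
    · rw [indicator_of_mem (show x ∈ Ioo 0 q from ⟨hx, hxq⟩),
        max_eq_left (hg_nonneg x ⟨hx, hxq⟩)]
    · rw [indicator_of_notMem (fun h => hxq h.2)]
      exact max_eq_right (hg_nonpos x (not_lt.1 hxq))
  rw [setIntegral_congr_fun measurableSet_Ioi h, integral_indicator measurableSet_Ioo,
    Measure.restrict_restrict measurableSet_Ioo, inter_eq_left.2 Ioo_subset_Ioi_self,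
    intervalIntegral.integral_of_le hq, integral_Ioc_eq_integral_Ioo]

section FiniteMeasure

variable {μ : Measure ℝ} [IsFiniteMeasure μ]

lemma monotone_cdfR : Monotone (cdfR μ) := fun _ _ h =>
  measureReal_mono (Icc_subset_Icc_right h)

lemma measureReal_Ioi_inter_Icc {x : ℝ} (hx : 0 ≤ x) (q : ℝ) :
    μ.real (Ioi x ∩ Icc 0 q) = max (cdfR μ q - cdfR μ x) 0 := by
  rcases le_or_gt x q with hxq | hqx
  · have h : Ioi x ∩ Icc 0 q = Icc 0 q \ Icc 0 x := by
      ext u; simp only [mem_inter_iff, mem_Ioi, mem_Icc, Set.mem_sdiff]; grind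
    rw [h, measureReal_sdiff (Icc_subset_Icc_right hxq) measurableSet_Icc,
      max_eq_left (sub_nonneg.2 (monotone_cdfR hxq))]
    rfl
  · have h : Ioi x ∩ Icc 0 q = ∅ := by
      ext u; simp only [mem_inter_iff, mem_Ioi, mem_Icc, mem_empty_iff_false, iff_false]; grind
    rw [h, measureReal_empty, max_eq_right (sub_nonpos.2 (monotone_cdfR hqx.le))]

lemma setIntegral_Icc_id_eq_intervalIntegral {q : ℝ} (hq : 0 ≤ q) :
    ∫ u in Icc 0 q, u ∂μ = ∫ x in 0..q, (cdfR μ q - cdfR μ x) := by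
  have hint : Integrable (fun u : ℝ => u) (μ.restrict (Icc 0 q)) :=
    continuous_id.integrableOn_Icc
  have hnn : 0 ≤ᵐ[μ.restrict (Icc 0 q)] fun u => u :=
    (ae_restrict_iff' measurableSet_Icc).2 (ae_of_all _ fun _ hu => hu.1)
  rw [hint.integral_eq_integral_meas_lt hnn,
    ← setIntegral_Ioi_max_zero_eq_intervalIntegral hq
      (fun x hx => sub_nonneg.2 (monotone_cdfR hx.2.le))
      (fun x hx => sub_nonpos.2 (monotone_cdfR hx))]
  refine setIntegral_congr_fun measurableSet_Ioi fun x hx => ?_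
  change (μ.restrict _).real (Ioi x) = _
  rw [measureReal_restrict_apply measurableSet_Ioi]
  exact measureReal_Ioi_inter_Icc (le_of_lt hx) q

end FiniteMeasure

section ProbabilityMeasure

variable {μ : Measure ℝ} [IsProbabilityMeasure μ]

lemma cdfR_eq_cdf (hμ : μ (Iio 0) = 0) : cdfR μ = cdf μ := by
  funext x
  have hneg : μ (Iic x \ Ici 0) = 0 :=
    measure_mono_null (fun _ hu => mem_Iio.2 (not_le.1 hu.2) : Iic x \ Ici 0 ⊆ Iio 0) hμ
  rw [cdf_eq_real, measureReal_def, ← measure_inter_add_sdiff (Iic x) measurableSet_Ici, hneg,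
    add_zero, Iic_inter_Ici]
  rfl

lemma exists_le_cdfR (hμ : μ (Iio 0) = 0) {t : ℝ} (ht : t < 1) :
    ∃ x, 0 ≤ x ∧ t ≤ cdfR μ x := by
  rw [cdfR_eq_cdf hμ]
  exact ((eventually_ge_atTop (0 : ℝ)).and
    ((tendsto_cdf_atTop (μ := μ)).eventually_const_le ht)).exists

lemma le_cdfR_quant (hμ : μ (Iio 0) = 0) {t : ℝ} (ht : t < 1) : t ≤ cdfR μ (quant μ t) := by
  have hne := exists_le_cdfR hμ ht
  rw [cdfR_eq_cdf hμ] at hne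
  rw [quant, cdfR_eq_cdf hμ]
  refine ge_of_tendsto (((cdf μ).right_continuous _).mono Ioi_subset_Ici_self)
    (eventually_nhdsWithin_of_forall fun y hy => ?_)
  obtain ⟨x, hx, hxy⟩ := exists_lt_of_csInf_lt hne hy
  exact hx.2.trans ((cdf μ).mono hxy.le)

lemma quant_le_iff (hμ : μ (Iio 0) = 0) {t x : ℝ} (ht : t < 1) (hx : 0 ≤ x) :
    quant μ t ≤ x ↔ t ≤ cdfR μ x :=
  ⟨fun h => (le_cdfR_quant hμ ht).trans (monotone_cdfR h),
    fun h => csInf_le ⟨0, fun _ hy => hy.1⟩ ⟨hx, h⟩⟩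

lemma lt_quant_iff (hμ : μ (Iio 0) = 0) {t x : ℝ} (ht : t < 1) (hx : 0 ≤ x) :
    x < quant μ t ↔ cdfR μ x < t := by
  simpa only [not_le] using (quant_le_iff hμ ht hx).not

lemma monotoneOn_quant (hμ : μ (Iio 0) = 0) : MonotoneOn (quant μ) (Iio 1) :=
  fun _ hs t ht hst =>
    (quant_le_iff hμ hs (quant_nonneg μ t)).2 (hst.trans (le_cdfR_quant hμ ht))

lemma setOf_lt_quant_inter_Ioc (hμ : μ (Iio 0) = 0) {p x : ℝ} (hp : p < 1) (hx : 0 ≤ x) :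
    {t | x < quant μ t} ∩ Ioc 0 p = Ioc (cdfR μ x) p := by
  ext t
  simp only [mem_inter_iff, mem_Ioc]
  constructor
  · rintro ⟨hxt, -, htp⟩
    exact ⟨(lt_quant_iff hμ (htp.trans_lt hp) hx).1 hxt, htp⟩
  · rintro ⟨hxt, htp⟩
    exact ⟨(lt_quant_iff hμ (htp.trans_lt hp) hx).2 hxt,
      ENNReal.toReal_nonneg.trans_lt hxt, htp⟩

lemma intervalIntegral_quant_eq (hμ : μ (Iio 0) = 0) {p : ℝ} (hp : p ∈ Ico 0 1) :
    ∫ t in 0..p, quant μ t = ∫ x in 0..quant μ p, (p - cdfR μ x) := by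
  have hmono : MonotoneOn (quant μ) (uIcc 0 p) := (monotoneOn_quant hμ).mono fun t ht =>
    ((uIcc_of_le hp.1 ▸ ht).2).trans_lt hp.2
  rw [intervalIntegral.integral_of_le hp.1,
    hmono.intervalIntegrable.1.integral_eq_integral_meas_lt (ae_of_all _ (quant_nonneg μ)),
    ← setIntegral_Ioi_max_zero_eq_intervalIntegral (quant_nonneg μ p)
      (fun x hx => sub_nonneg.2 ((lt_quant_iff hμ hp.2 hx.1.le).1 hx.2).le)
      (fun x hx => sub_nonpos.2 ((quant_le_iff hμ hp.2 ((quant_nonneg μ p).trans hx)).1 hx))]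
  refine setIntegral_congr_fun measurableSet_Ioi fun x hx => ?_
  rw [measureReal_def, Measure.restrict_apply' measurableSet_Ioc,
    setOf_lt_quant_inter_Ioc hμ hp.2 (le_of_lt hx), ← measureReal_def, Real.volume_real_Ioc]

end ProbabilityMeasure

/-- For every `μ ∈ 𝐌` and `p ∈ [0,1)`,
`Λ_μ(p) − L_μ(p) = (Q_μ(p)/m_μ) · (F_μ(Q_μ(p)) − p)`. -/
theorem pseudoLorenz_sub_lorenz (μ : Measure ℝ) (hμ : MemM μ)
    (p : ℝ) (hp : p ∈ Set.Ico (0:ℝ) 1) :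
    pseudoLorenz μ p - lorenz μ p = quant μ p / mMean μ * (cdfR μ (quant μ p) - p) := by
  obtain ⟨hprob, hμ0, -, -⟩ := hμ
  set q := quant μ p
  have hF : IntervalIntegrable (cdfR μ) volume 0 q := monotone_cdfR.intervalIntegrable
  have hdiff :
      ∫ x in 0..q, ((cdfR μ q - cdfR μ x) - (p - cdfR μ x)) = q * (cdfR μ q - p) := by
    simp only [sub_sub_sub_cancel_right, intervalIntegral.integral_const, sub_zero, smul_eq_mul]
  rw [pseudoLorenz, if_neg hp.2.ne, lorenz,
    setIntegral_Icc_id_eq_intervalIntegral (quant_nonneg μ p),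
    intervalIntegral_quant_eq hμ0 hp, div_sub_div_same,
    ← intervalIntegral.integral_sub (intervalIntegrable_const.sub hF)
      (intervalIntegrable_const.sub hF),
    hdiff, div_mul_eq_mul_div]
end

section
/- Let a < b be real numbers and let f : ℝ → ℝ be convex on the open interval (a,b). Then the left-derivative function x ↦ ∂₋f(x) (which exists at every point of (a,b)) is left-continuous on (a,b): for every z ∈ (a,b), ∂₋f(x) tends to ∂₋f(z) as x tends to z from the left. -/
open MeasureTheory Filter Topology

/-!
The left derivative `g` of a convex function is monotone, so `g x ≤ g z` for `x < z`. Conversely,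
any `c < g z` is exceeded by a secant slope `slope f y z` with `y < z`; as `f` is continuous at
`z`, `slope f y x` still exceeds `c` for `x < z` near `z`, and it is bounded above by `g x`.
-/

open Set

theorem continuousAt_slope_of_ne {𝕜 E : Type*} [NontriviallyNormedField 𝕜] [NormedAddCommGroup E]
    [NormedSpace 𝕜 E] {f : 𝕜 → E} {y z : 𝕜} (hf : ContinuousAt f z) (hyz : y ≠ z) :
    ContinuousAt (slope f y) z :=
  ((continuousAt_dslope_of_ne hyz.symm).2 hf).congr
    ((eventually_ne_nhds hyz.symm).mono fun _ hx ↦ dslope_of_ne f hx)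

namespace ConvexOn

variable {S : Set ℝ} {f : ℝ → ℝ} {z : ℝ}

theorem continuousWithinAt_leftDeriv (hfc : ConvexOn ℝ S f) (hz : z ∈ interior S) :
    ContinuousWithinAt (fun x ↦ derivWithin f (Iio x) x) (Iio z) z := by
  have hint : ∀ᶠ x in 𝓝[<] z, x ∈ interior S :=
    nhdsWithin_le_nhds (isOpen_interior.mem_nhds hz)
  refine tendsto_order.2 ⟨fun c hc ↦ ?_, fun c hc ↦ ?_⟩
  · have hslope : Tendsto (slope f z) (𝓝[<] z) (𝓝 (derivWithin f (Iio z) z)) :=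
      (hasDerivWithinAt_iff_tendsto_slope' self_notMem_Iio).1
        (hfc.hasDerivWithinAt_leftDeriv_of_mem_interior hz)
    obtain ⟨y, hyS, hyz, hcy⟩ :=
      (hint.and (eventually_mem_nhdsWithin.and (hslope.eventually (lt_mem_nhds hc)))).exists
    rw [slope_comm] at hcy
    have hcont : ContinuousAt (slope f y) z :=
      continuousAt_slope_of_ne (hfc.continuousOn_interior.continuousAt
        (isOpen_interior.mem_nhds hz)) hyz.ne
    filter_upwards [hint, nhdsWithin_le_nhds ((hcont.eventually (lt_mem_nhds hcy)).and
      (Ioi_mem_nhds hyz))] with x hx ⟨hcx, hyx⟩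
    exact hcx.trans_le (hfc.slope_le_leftDeriv_of_mem_interior (interior_subset hyS) hx hyx)
  · filter_upwards [hint, eventually_mem_nhdsWithin] with x hx hxz
    exact (hfc.monotoneOn_leftDeriv hx hz hxz.le).trans_lt hc

end ConvexOn

theorem leftDeriv_leftContinuous_of_convexOn_general (a b : ℝ) (f : ℝ → ℝ)
    (hf : ConvexOn ℝ (Set.Ioo a b) f) :
    (∀ z ∈ Set.Ioo a b, DifferentiableWithinAt ℝ f (Set.Iio z) z) ∧
    ∀ z ∈ Set.Ioo a b,
      Tendsto (fun x => derivWithin f (Set.Iio x) x) (𝓝[<] z)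
        (𝓝 (derivWithin f (Set.Iio z) z)) := by
  refine ⟨fun z hz ↦ ?_, fun z hz ↦ ?_⟩ <;> rw [← interior_Ioo] at hz
  exacts [hf.differentiableWithinAt_Iio_of_mem_interior hz, hf.continuousWithinAt_leftDeriv hz]

/-- The left derivative of a function convex on an open interval `(a,b)`
exists at every point of `(a,b)` and is left-continuous there. -/
theorem leftDeriv_leftContinuous_of_convexOn (a b : ℝ) (hab : a < b) (f : ℝ → ℝ)
    (hf : ConvexOn ℝ (Set.Ioo a b) f) :
    (∀ z ∈ Set.Ioo a b, DifferentiableWithinAt ℝ f (Set.Iio z) z) ∧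
    ∀ z ∈ Set.Ioo a b,
      Tendsto (fun x => derivWithin f (Set.Iio x) x) (𝓝[<] z)
        (𝓝 (derivWithin f (Set.Iio z) z)) :=
  leftDeriv_leftContinuous_of_convexOn_general a b f hf
end

section
/- Fix h ∈ (0,1). Then the set of Gini coefficients of measures with Hoover coefficient h is exactly the half-open interval [h, 2h − h²): {G(μ) : μ ∈ 𝐌, H(μ) = h} = [h, 2h − h²). -/
open MeasureTheory Filter Topology

/-! Write `m` for the mean and `D = ∫ |x - m| dμ = 2 m H`.
Since `|x - m| ≤ ∫ |x - y| dμ(y)`, integrating in `x` gives `H ≤ G`.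
For the upper bound, integrate against `μ ⊗ μ` the inequality, valid for `x, y ≥ 0`,
`m |x - y| + 2 m min ((x - m)⁺, (y - m)⁺) + 2 (m - x)⁺ (m - y)⁺ ≤ m (|x - m| + |y - m|)`:
as `∫ (m - x)⁺ dμ = ∫ (x - m)⁺ dμ = D / 2`, this gives
`m ∫∫ |x - y| + 2 m ∫∫ min ((x - m)⁺, (y - m)⁺) + D² / 2 ≤ 2 m D`,
and the middle term is positive as soon as `D > 0`; this is `G < 2H - H²`.
Conversely, masses `h, q, 1 - h - q` at `0, 1, K`, with `K` chosen so that the mean is `1`,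
have Hoover coefficient `h` and Gini coefficient `h (1 + q)`, which sweeps `[h, 2h - h²)` for
`0 ≤ q < 1 - h`. -/

open Function

section Integrals

variable {α : Type*} [MeasurableSpace α] {μ : Measure α}

lemma integral_max_zero_eq_half_integral_abs {f : α → ℝ} (hf : Integrable f μ)
    (hf0 : ∫ x, f x ∂μ = 0) :
    ∫ x, max (f x) 0 ∂μ = (∫ x, |f x| ∂μ) / 2 := by
  have hpt : ∀ x, max (f x) 0 = (|f x| + f x) / 2 := fun x => by
    rcases le_total 0 (f x) with h | h
    · rw [max_eq_left h, abs_of_nonneg h]; ring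
    · rw [max_eq_right h, abs_of_nonpos h]; ring
  simp_rw [hpt]
  rw [integral_div, integral_add hf.abs hf, hf0, add_zero]

variable [IsFiniteMeasure μ]

lemma integrable_min_prod {f : α → ℝ} (hf : Integrable f μ) :
    Integrable (fun z : α × α => min (f z.1) (f z.2)) (μ.prod μ) :=
  (hf.comp_fst μ).inf (hf.comp_snd μ)

lemma integral_min_prod_pos {f : α → ℝ} (hf0 : ∀ x, 0 ≤ f x) (hf : Integrable f μ)
    (hpos : 0 < ∫ x, f x ∂μ) :
    0 < ∫ z, min (f z.1) (f z.2) ∂(μ.prod μ) := by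
  have hsupp : support (fun z : α × α => min (f z.1) (f z.2)) = support f ×ˢ support f := by
    ext z
    rw [mem_support, Set.mem_prod, mem_support, mem_support, ← (hf0 _).lt_iff_ne',
      ← (hf0 _).lt_iff_ne', ← (le_min (hf0 _) (hf0 _)).lt_iff_ne', lt_min_iff]
  rw [integral_pos_iff_support_of_nonneg hf0 hf] at hpos
  rw [integral_pos_iff_support_of_nonneg (f := fun z : α × α => min (f z.1) (f z.2))
    (fun z => le_min (hf0 _) (hf0 _)) (integrable_min_prod hf), hsupp, Measure.prod_prod]
  exact ENNReal.mul_pos hpos.ne' hpos.ne'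

end Integrals

lemma abs_sub_integral_le_integral_abs_sub {μ : Measure ℝ} [IsProbabilityMeasure μ]
    (hμ : Integrable (fun y => y) μ) (x : ℝ) :
    |x - ∫ y, y ∂μ| ≤ ∫ y, |x - y| ∂μ := by
  have hx : x - ∫ y, y ∂μ = ∫ y, (x - y) ∂μ := by
    rw [integral_sub (integrable_const x) hμ, integral_const, probReal_univ, one_smul]
  rw [hx]
  exact abs_integral_le_integral_abs

lemma integrable_abs_sub_prod {μ : Measure ℝ} [IsFiniteMeasure μ]
    (hμ : Integrable (fun x => x) μ) :
    Integrable (fun z : ℝ × ℝ => |z.1 - z.2|) (μ.prod μ) :=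
  ((hμ.comp_fst μ).sub (hμ.comp_snd μ)).abs

lemma mul_abs_sub_add_le {m x y : ℝ} (hx : 0 ≤ x) (hy : 0 ≤ y) :
    m * |x - y| + 2 * m * min (max (x - m) 0) (max (y - m) 0)
      + 2 * (max (m - x) 0 * max (m - y) 0) ≤ m * (|x - m| + |y - m|) := by
  rcases le_total x m with h1 | h1 <;> rcases le_total y m with h2 | h2 <;>
    rcases le_total x y with h3 | h3 <;>
    simp only [abs_of_nonneg, abs_of_nonpos, max_eq_left, max_eq_right, min_eq_left, min_eq_right,
      min_self, sub_nonneg, sub_nonpos, sub_le_sub_iff_right, h1, h2, h3] <;>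
    nlinarith [mul_nonneg hx (sub_nonneg.2 h2), mul_nonneg hy (sub_nonneg.2 h1)]

section GiniHoover

variable {μ : Measure ℝ} [IsProbabilityMeasure μ]

lemma hoover_le_gini (hμ : Integrable (fun x => x) μ) (hm : 0 ≤ mMean μ) :
    hoover μ ≤ gini μ := by
  rw [hoover, gini, integral_prod _ (integrable_abs_sub_prod hμ)]
  refine div_le_div_of_nonneg_right ?_ (by positivity)
  exact integral_mono (hμ.sub (integrable_const _)).abs
    (integrable_abs_sub_prod hμ).integral_prod_left (abs_sub_integral_le_integral_abs_sub hμ)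

lemma integral_max_sub_mMean (hμ : Integrable (fun x => x) μ) :
    ∫ x, max (x - mMean μ) 0 ∂μ = (∫ x, |x - mMean μ| ∂μ) / 2 := by
  refine integral_max_zero_eq_half_integral_abs (f := fun x => x - mMean μ)
    (hμ.sub (integrable_const _)) ?_
  rw [integral_sub hμ (integrable_const _), integral_const, probReal_univ, one_smul]
  exact sub_self _

lemma integral_max_mMean_sub (hμ : Integrable (fun x => x) μ) :
    ∫ x, max (mMean μ - x) 0 ∂μ = (∫ x, |x - mMean μ| ∂μ) / 2 := by
  simp_rw [← abs_sub_comm (mMean μ)]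
  refine integral_max_zero_eq_half_integral_abs (f := fun x => mMean μ - x)
    ((integrable_const _).sub hμ) ?_
  rw [integral_sub (integrable_const _) hμ, integral_const, probReal_univ, one_smul]
  exact sub_self _

lemma integral_abs_sub_prod_add_le (h0 : ∀ᵐ x ∂μ, 0 ≤ x) (hμ : Integrable (fun x => x) μ)
    (m : ℝ) :
    m * ∫ z, |z.1 - z.2| ∂(μ.prod μ)
      + 2 * m * ∫ z, min (max (z.1 - m) 0) (max (z.2 - m) 0) ∂(μ.prod μ)
      + 2 * (∫ x, max (m - x) 0 ∂μ) ^ 2 ≤ 2 * m * ∫ x, |x - m| ∂μ := by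
  have hdev : Integrable (fun x => |x - m|) μ := (hμ.sub (integrable_const m)).abs
  have hup : Integrable (fun x => x - m) μ := hμ.sub (integrable_const m)
  have hlow : Integrable (fun x => m - x) μ := (integrable_const m).sub hμ
  have h1 := (integrable_abs_sub_prod hμ).const_mul m
  have h2 := (integrable_min_prod hup.pos_part).const_mul (2 * m)
  have h3 := (hlow.pos_part.mul_prod hlow.pos_part).const_mul 2
  have h12 : Integrable (fun z : ℝ × ℝ => m * |z.1 - z.2|
      + 2 * m * min (max (z.1 - m) 0) (max (z.2 - m) 0)) (μ.prod μ) := h1.add h2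
  have hmono : ∫ z, (m * |z.1 - z.2| + 2 * m * min (max (z.1 - m) 0) (max (z.2 - m) 0)
      + 2 * (max (m - z.1) 0 * max (m - z.2) 0)) ∂(μ.prod μ)
      ≤ ∫ z, m * (|z.1 - m| + |z.2 - m|) ∂(μ.prod μ) :=
    integral_mono_ae (h12.add h3)
      (((hdev.comp_fst μ).add (hdev.comp_snd μ)).const_mul m) <| by
        filter_upwards [Measure.quasiMeasurePreserving_fst.ae h0,
          Measure.quasiMeasurePreserving_snd.ae h0] with z hx hy using mul_abs_sub_add_le hx hy
  rw [integral_add h12 h3, integral_add h1 h2, integral_const_mul, integral_const_mul,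
    integral_const_mul, integral_prod_mul (fun x => max (m - x) 0) (fun x => max (m - x) 0),
    integral_const_mul, integral_add (hdev.comp_fst μ) (hdev.comp_snd μ),
    integral_fun_fst (fun x => |x - m|), integral_fun_snd (fun x => |x - m|)] at hmono
  simp only [probReal_univ, one_smul] at hmono
  linarith

lemma gini_lt_two_mul_hoover_sub_sq (h0 : ∀ᵐ x ∂μ, 0 ≤ x) (hμ : Integrable (fun x => x) μ)
    (hpos : 0 < hoover μ) :
    gini μ < 2 * hoover μ - hoover μ ^ 2 := by
  set m := mMean μ
  set D := ∫ x, |x - m| ∂μ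
  set S := ∫ z, |z.1 - z.2| ∂(μ.prod μ)
  have hG : gini μ = S / (2 * m) := rfl
  have hH : hoover μ = D / (2 * m) := rfl
  rw [hH] at hpos ⊢
  have hm : 0 < m := by
    by_contra! hm
    exact (div_nonpos_of_nonneg_of_nonpos (integral_nonneg fun x => abs_nonneg _)
      (by linarith)).not_gt hpos
  have hD : 0 < D := (div_pos_iff_of_pos_right (by positivity)).1 hpos
  have hM := integral_min_prod_pos (f := fun x => max (x - m) 0) (fun x => le_max_right _ _)
    (hμ.sub (integrable_const m)).pos_part (by rw [integral_max_sub_mMean hμ]; positivity)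
  have key := integral_abs_sub_prod_add_le h0 hμ m
  rw [integral_max_mMean_sub hμ] at key
  have hS : m * S < 2 * m * D - D ^ 2 / 2 := by linarith [mul_pos hm hM]
  calc gini μ = m * S / (2 * m ^ 2) := by rw [hG]; field_simp
    _ < (2 * m * D - D ^ 2 / 2) / (2 * m ^ 2) := by gcongr
    _ = 2 * (D / (2 * m)) - (D / (2 * m)) ^ 2 := by field_simp

end GiniHoover

section DiscreteMeasure

variable {ι α : Type*} [Fintype ι] [MeasurableSpace α]

noncomputable def discreteMeasure (w : ι → ℝ) (a : ι → α) : Measure α :=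
  ∑ i, ENNReal.ofReal (w i) • Measure.dirac (a i)

lemma isProbabilityMeasure_discreteMeasure {w : ι → ℝ} (hw : ∀ i, 0 ≤ w i)
    (hw1 : ∑ i, w i = 1) (a : ι → α) : IsProbabilityMeasure (discreteMeasure w a) :=
  ⟨by simp [discreteMeasure, ← ENNReal.ofReal_sum_of_nonneg fun i _ => hw i, hw1]⟩

variable [MeasurableSingletonClass α]

lemma discreteMeasure_apply_eq_zero (w : ι → ℝ) {a : ι → α} {s : Set α} (hs : ∀ i, a i ∉ s) :
    discreteMeasure w a s = 0 := by
  simp [discreteMeasure, Measure.dirac_apply, hs]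

lemma integrable_discreteMeasure (w : ι → ℝ) (a : ι → α) (f : α → ℝ) :
    Integrable f (discreteMeasure w a) :=
  integrable_finsetSum_measure.2 fun _ _ =>
    (integrable_dirac enorm_lt_top).smul_measure ENNReal.ofReal_ne_top

lemma integral_discreteMeasure {w : ι → ℝ} (hw : ∀ i, 0 ≤ w i) (a : ι → α) (f : α → ℝ) :
    ∫ x, f x ∂(discreteMeasure w a) = ∑ i, w i * f (a i) := by
  rw [discreteMeasure, integral_finsetSum_measure fun _ _ =>
    (integrable_dirac enorm_lt_top).smul_measure ENNReal.ofReal_ne_top]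
  refine Finset.sum_congr rfl fun i _ => ?_
  rw [integral_smul_measure, integral_dirac, ENNReal.toReal_ofReal (hw i), smul_eq_mul]

end DiscreteMeasure

section ThreePoint

variable {h q : ℝ}

noncomputable def threePoint (h q : ℝ) : Measure ℝ :=
  discreteMeasure ![h, q, 1 - h - q] ![0, 1, (1 - q) / (1 - h - q)]

lemma integral_threePoint (hh : 0 ≤ h) (hq : 0 ≤ q) (hhq : h + q < 1) (f : ℝ → ℝ) :
    ∫ x, f x ∂(threePoint h q) =
      h * f 0 + q * f 1 + (1 - h - q) * f ((1 - q) / (1 - h - q)) := by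
  rw [threePoint, integral_discreteMeasure]
  · simp [Fin.sum_univ_three, add_assoc]
  · intro i; fin_cases i <;> simp <;> linarith

lemma mMean_threePoint (hh : 0 ≤ h) (hq : 0 ≤ q) (hhq : h + q < 1) :
    mMean (threePoint h q) = 1 := by
  rw [mMean, integral_threePoint hh hq hhq, mul_div_cancel₀ _ (by linarith)]
  ring

lemma memM_threePoint (hh : 0 ≤ h) (hq : 0 ≤ q) (hhq : h + q < 1) :
    MemM (threePoint h q) := by
  have hK : 0 ≤ (1 - q) / (1 - h - q) := div_nonneg (by linarith) (by linarith)
  refine ⟨isProbabilityMeasure_discreteMeasure ?_ ?_ _, discreteMeasure_apply_eq_zero _ ?_,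
    integrable_discreteMeasure _ _ _, by rw [mMean_threePoint hh hq hhq]; exact one_pos⟩
  · intro i; fin_cases i <;> simp <;> linarith
  · simp [Fin.sum_univ_three]
  · intro i; fin_cases i <;> simp [hK]

lemma hoover_threePoint (hh : 0 ≤ h) (hq : 0 ≤ q) (hhq : h + q < 1) :
    hoover (threePoint h q) = h := by
  have hK : 1 ≤ (1 - q) / (1 - h - q) := by rw [one_le_div (by linarith)]; linarith
  rw [hoover, mMean_threePoint hh hq hhq, integral_threePoint hh hq hhq,
    abs_of_nonneg (sub_nonneg.2 hK), mul_sub, mul_div_cancel₀ _ (by linarith)]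
  norm_num

lemma gini_threePoint (hh : 0 ≤ h) (hq : 0 ≤ q) (hhq : h + q < 1) :
    gini (threePoint h q) = h * (1 + q) := by
  have hK : 1 ≤ (1 - q) / (1 - h - q) := by rw [one_le_div (by linarith)]; linarith
  have := (memM_threePoint hh hq hhq).1
  rw [gini, mMean_threePoint hh hq hhq,
    integral_prod _
      (integrable_abs_sub_prod (μ := threePoint h q) (integrable_discreteMeasure _ _ _))]
  simp only [integral_threePoint hh hq hhq]
  set K := (1 - q) / (1 - h - q)
  have hrK : (1 - h - q) * K = 1 - q := mul_div_cancel₀ _ (by linarith)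
  clear_value K
  have h1K : |1 - K| = K - 1 := by rw [abs_sub_comm]; exact abs_of_nonneg (by linarith)
  norm_num [abs_of_nonneg (by linarith : 0 ≤ K), abs_of_nonneg (by linarith : 0 ≤ K - 1), h1K]
  linear_combination (h + q) * hrK

end ThreePoint

/-- For `h ∈ (0,1)`, the set of Gini coefficients of measures of `𝐌`
with Hoover coefficient `h` is exactly `[h, 2h − h²)`. -/
theorem gini_range_of_hoover_eq (h : ℝ) (hh : h ∈ Set.Ioo (0:ℝ) 1) :
    {g : ℝ | ∃ μ : Measure ℝ, MemM μ ∧ hoover μ = h ∧ gini μ = g} =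
      Set.Ico h (2 * h - h ^ 2) := by
  ext g
  constructor
  · rintro ⟨μ, ⟨_, hμ0, hμ, hm⟩, rfl, rfl⟩
    have h0 : ∀ᵐ x ∂μ, 0 ≤ x := ae_iff.2 (by simpa using hμ0)
    exact ⟨hoover_le_gini hμ hm.le, gini_lt_two_mul_hoover_sub_sq h0 hμ hh.1⟩
  · rintro ⟨hhg, hg⟩
    have hq : 0 ≤ g / h - 1 := by rwa [sub_nonneg, one_le_div hh.1]
    have hhq : h + (g / h - 1) < 1 := by
      have : g / h < 2 - h := by rw [div_lt_iff₀ hh.1]; linarith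
      linarith
    refine ⟨threePoint h (g / h - 1), memM_threePoint hh.1.le hq hhq,
      hoover_threePoint hh.1.le hq hhq, ?_⟩
    rw [gini_threePoint hh.1.le hq hhq, add_sub_cancel, mul_div_cancel₀ _ hh.1.ne']
end

section
/- Let I ⊆ ℝ be an open interval and let F_n : I → ℝ (n ∈ ℕ) be convex functions converging uniformly on I to a function F_∞. Then F_∞ is convex, and at every point x ∈ I at which the left-derivative function of F_∞ is continuous, one has ∂₋F_n(x) → ∂₋F_∞(x) as n → ∞. -/
open MeasureTheory Filter Topology

/-!
Convexity passes to pointwise limits, and slopes of secants converge under pointwise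
convergence. For convex functions the left derivative at `x` dominates every secant slope
on `[y, x]` and is dominated by every secant slope on `[x, z]`, so
`liminf ∂₋Fₙ(x) ≥ slope F∞ y x → ∂₋F∞(x)` as `y ↑ x`, and
`limsup ∂₋Fₙ(x) ≤ slope F∞ x z ≤ ∂₋F∞(z) → ∂₋F∞(x)` as `z ↓ x`; only the last limit uses
the continuity of `∂₋F∞` at `x`.
-/

open Set

section PointwiseLimit

variable {ι : Type*} {l : Filter ι}

theorem convexOn_of_tendsto {E : Type*} [AddCommGroup E] [Module ℝ E] [l.NeBot] {s : Set E}
    {F : ι → E → ℝ} {f : E → ℝ} (hF : ∀ᶠ i in l, ConvexOn ℝ s (F i))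
    (hlim : ∀ x ∈ s, Tendsto (fun i => F i x) l (𝓝 (f x))) :
    ConvexOn ℝ s f := by
  obtain ⟨i, hi⟩ := hF.exists
  refine ⟨hi.1, fun x hx y hy a b ha hb hab => ?_⟩
  refine le_of_tendsto_of_tendsto (hlim _ (hi.1 hx hy ha hb hab))
    (((hlim x hx).const_smul a).add ((hlim y hy).const_smul b)) ?_
  filter_upwards [hF] with j hj using hj.2 hx hy ha hb hab

variable {S : Set ℝ} {F : ι → ℝ → ℝ} {f : ℝ → ℝ}

theorem tendsto_slope_of_tendsto {x y : ℝ} (hx : Tendsto (fun i => F i x) l (𝓝 (f x)))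
    (hy : Tendsto (fun i => F i y) l (𝓝 (f y))) :
    Tendsto (fun i => slope (F i) x y) l (𝓝 (slope f x y)) := by
  simp only [slope_def_field]
  exact (hy.sub hx).div_const _

theorem eventually_lt_leftDeriv_of_tendsto {x d c : ℝ} (hF : ∀ᶠ i in l, ConvexOn ℝ S (F i))
    (hlim : ∀ y ∈ S, Tendsto (fun i => F i y) l (𝓝 (f y))) (hx : x ∈ interior S)
    (hf : HasDerivWithinAt f d (Iio x) x) (hc : c < d) :
    ∀ᶠ i in l, c < derivWithin (F i) (Iio x) x := by
  have hslope := (hasDerivWithinAt_iff_tendsto_slope' self_notMem_Iio).1 hf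
  have hS : ∀ᶠ y in 𝓝[<] x, y ∈ S := nhdsWithin_le_nhds (mem_interior_iff_mem_nhds.1 hx)
  obtain ⟨y, hyS, hcy, hyx⟩ : ∃ y ∈ S, c < slope f x y ∧ y < x :=
    (hS.and ((hslope.eventually (eventually_gt_nhds hc)).and self_mem_nhdsWithin)).exists
  rw [slope_comm] at hcy
  filter_upwards [hF, (tendsto_slope_of_tendsto (hlim y hyS)
    (hlim x (interior_subset hx))).eventually (eventually_gt_nhds hcy)] with i hi hci
  exact hci.trans_le (hi.slope_le_leftDeriv_of_mem_interior hyS hx hyx)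

theorem eventually_leftDeriv_lt_of_tendsto {x z u : ℝ} (hF : ∀ᶠ i in l, ConvexOn ℝ S (F i))
    (hlim : ∀ y ∈ S, Tendsto (fun i => F i y) l (𝓝 (f y))) (hx : x ∈ interior S)
    (hz : z ∈ S) (hxz : x < z) (hu : slope f x z < u) :
    ∀ᶠ i in l, derivWithin (F i) (Iio x) x < u := by
  filter_upwards [hF, (tendsto_slope_of_tendsto (hlim x (interior_subset hx))
    (hlim z hz)).eventually (eventually_lt_nhds hu)] with i hi hiu
  calc derivWithin (F i) (Iio x) x ≤ derivWithin (F i) (Ioi x) x :=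
        hi.leftDeriv_le_rightDeriv_of_mem_interior hx
    _ ≤ slope (F i) x z := hi.rightDeriv_le_slope_of_mem_interior hx hz hxz
    _ < u := hiu

theorem ConvexOn.exists_slope_lt_of_continuousAt_leftDeriv {x u : ℝ} (hf : ConvexOn ℝ S f)
    (hx : x ∈ interior S) (hcont : ContinuousAt (fun y => derivWithin f (Iio y) y) x)
    (hu : derivWithin f (Iio x) x < u) :
    ∃ z ∈ S, x < z ∧ slope f x z < u := by
  have hnear : ∀ᶠ z in 𝓝[>] x, z ∈ interior S ∧ derivWithin f (Iio z) z < u :=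
    nhdsWithin_le_nhds (Eventually.and (isOpen_interior.mem_nhds hx) (hcont (Iio_mem_nhds hu)))
  obtain ⟨z, ⟨hzS, hzu⟩, hxz⟩ := (hnear.and self_mem_nhdsWithin).exists
  exact ⟨z, interior_subset hzS, hxz,
    (hf.slope_le_leftDeriv_of_mem_interior (interior_subset hx) hzS hxz).trans_lt hzu⟩

theorem tendsto_leftDeriv_of_tendsto {x : ℝ} (hF : ∀ᶠ i in l, ConvexOn ℝ S (F i))
    (hlim : ∀ y ∈ S, Tendsto (fun i => F i y) l (𝓝 (f y))) (hf : ConvexOn ℝ S f)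
    (hx : x ∈ interior S) (hcont : ContinuousAt (fun y => derivWithin f (Iio y) y) x) :
    Tendsto (fun i => derivWithin (F i) (Iio x) x) l (𝓝 (derivWithin f (Iio x) x)) := by
  refine tendsto_order.2 ⟨fun c hc => eventually_lt_leftDeriv_of_tendsto hF hlim hx
    (hf.hasDerivWithinAt_leftDeriv_of_mem_interior hx) hc, fun u hu => ?_⟩
  obtain ⟨z, hzS, hxz, hzu⟩ := hf.exists_slope_lt_of_continuousAt_leftDeriv hx hcont hu
  exact eventually_leftDeriv_lt_of_tendsto hF hlim hx hzS hxz hzu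

end PointwiseLimit

theorem leftDeriv_tendsto_of_tendstoUniformlyOn_convexOn_general
    (I : Set ℝ) (hI : IsOpen I)
    (F : ℕ → ℝ → ℝ) (Flim : ℝ → ℝ)
    (hconv : ∀ n, ConvexOn ℝ I (F n))
    (hunif : TendstoUniformlyOn F Flim atTop I) :
    ConvexOn ℝ I Flim ∧
    ∀ x ∈ I, ContinuousAt (fun y => derivWithin Flim (Set.Iio y) y) x →
      Tendsto (fun n => derivWithin (F n) (Set.Iio x) x) atTop
        (𝓝 (derivWithin Flim (Set.Iio x) x)) := by
  have hlim : ∀ x ∈ I, Tendsto (fun n => F n x) atTop (𝓝 (Flim x)) :=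
    fun x hx => hunif.tendsto_at hx
  have hFlim : ConvexOn ℝ I Flim := convexOn_of_tendsto (.of_forall hconv) hlim
  refine ⟨hFlim, fun x hx hcont => ?_⟩
  exact tendsto_leftDeriv_of_tendsto (.of_forall hconv) hlim hFlim (by rwa [hI.interior_eq]) hcont

/-- If convex functions `F_n` converge uniformly on an open interval `I`
to `F_∞`, then `F_∞` is convex and the left derivatives converge at every point where the
left-derivative function of `F_∞` is continuous. -/
theorem leftDeriv_tendsto_of_tendstoUniformlyOn_convexOn
    (I : Set ℝ) (hI : IsOpen I) (hIconv : Convex ℝ I)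
    (F : ℕ → ℝ → ℝ) (Flim : ℝ → ℝ)
    (hconv : ∀ n, ConvexOn ℝ I (F n))
    (hunif : TendstoUniformlyOn F Flim atTop I) :
    ConvexOn ℝ I Flim ∧
    ∀ x ∈ I, ContinuousAt (fun y => derivWithin Flim (Set.Iio y) y) x →
      Tendsto (fun n => derivWithin (F n) (Set.Iio x) x) atTop
        (𝓝 (derivWithin Flim (Set.Iio x) x)) :=
  leftDeriv_tendsto_of_tendstoUniformlyOn_convexOn_general I hI F Flim hconv hunif
end
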